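/- arXiv:1803.09986 — 2 statements merged into one kernel-verified Lean document; each statement's English description precedes it below -/
import Mathlib

section
/- If D is a d-set in ℝⁿ with d-measure μ, then its closure D̄ is also a d-set, and moreover μ(D̄ \ D) = 0 when μ is extended naturally (equivalently, the restriction of the d-dimensional Hausdorff measure to D̄ \ D is zero). -/
open MeasureTheory Metric Set Filter
open scoped ENNReal

/-!
Both Ahlfors bounds pass to `closure D` with the same measure: for `x ∈ closure D` and a point
`y ∈ D` close to `x`, `ball y (r / 2) ⊆ ball x r`, and `ball x s ⊆ ball y r` for `s < r`, after
which continuity from below lets `s ↑ r`. The lower bound at points of `closure D \ D`, a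
`μ`-null set, then makes it `μH[d]`-null: Besicovitch gives covers by arbitrarily small balls
`closedBall x r` of total `μ`-mass at most `μ (closure D \ D) + ε`, and each ball has
`ediam ^ d ≤ (2 r) ^ d ≤ (2 ^ d / c) μ (closedBall x r)`.
-/

section PseudoMetric

variable {X : Type*} [PseudoMetricSpace X] {x : X} {r : ℝ}

theorem ediam_closedBall_le_ofReal (hr : 0 ≤ r) :
    ediam (closedBall x r) ≤ ENNReal.ofReal (2 * r) := by
  rw [← closedEBall_ofReal hr, ENNReal.ofReal_mul zero_le_two, ENNReal.ofReal_ofNat]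
  exact ediam_closedEBall_le

theorem ediam_closedBall_rpow_le {d : ℝ} (hd : 0 ≤ d) (hr : 0 ≤ r) :
    ediam (closedBall x r) ^ d ≤ ENNReal.ofReal ((2 * r) ^ d) := by
  rw [← ENNReal.ofReal_rpow_of_nonneg (by positivity) hd]
  exact ENNReal.rpow_le_rpow (ediam_closedBall_le_ofReal hr) hd

variable [MeasurableSpace X] {μ : Measure X} {D : Set X} {M : ℝ≥0∞}

theorem le_measure_ball_of_mem_closure (hx : x ∈ closure D) {s : ℝ} (hsr : s < r)
    (h : ∀ y ∈ D, M ≤ μ (ball y s)) : M ≤ μ (ball x r) := by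
  obtain ⟨y, hyD, hxy⟩ := Metric.mem_closure_iff.1 hx (r - s) (sub_pos.2 hsr)
  exact (h y hyD).trans (measure_mono (ball_subset_ball' (by rw [dist_comm]; linarith)))

theorem measure_ball_le_of_mem_closure (hx : x ∈ closure D)
    (h : ∀ y ∈ D, μ (ball y r) ≤ M) : μ (ball x r) ≤ M := by
  have hcover : ball x r ⊆ ⋃ n : ℕ, ball x (r - 1 / (n + 1)) := fun z hz => by
    obtain ⟨n, hn⟩ := exists_nat_one_div_lt (sub_pos.2 (mem_ball.1 hz))
    exact mem_iUnion.2 ⟨n, mem_ball.2 (by linarith)⟩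
  have hmono : Monotone fun n : ℕ => ball x (r - 1 / (n + 1)) := fun m n hmn =>
    ball_subset_ball (by gcongr)
  have hterm : ∀ n : ℕ, μ (ball x (r - 1 / (n + 1))) ≤ M := fun n => by
    obtain ⟨y, hyD, hxy⟩ := Metric.mem_closure_iff.1 hx (1 / (n + 1)) Nat.one_div_pos_of_nat
    exact (measure_mono (ball_subset_ball' (by linarith))).trans (h y hyD)
  calc μ (ball x r) ≤ μ (⋃ n : ℕ, ball x (r - 1 / (n + 1))) := measure_mono hcover
    _ = ⨆ n : ℕ, μ (ball x (r - 1 / (n + 1))) := hmono.measure_iUnion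
    _ ≤ M := iSup_le hterm

theorem isLocallyFiniteMeasure_of_measure_ball_lt_top (hμD : μ Dᶜ = 0) (hr : 0 < r)
    (h : ∀ x ∈ closure D, μ (ball x r) < ∞) : IsLocallyFiniteMeasure μ := by
  refine ⟨fun x => ?_⟩
  by_cases hx : x ∈ closure D
  · exact ⟨ball x r, ball_mem_nhds x hr, h x hx⟩
  · refine ⟨(closure D)ᶜ, isClosed_closure.isOpen_compl.mem_nhds hx, ?_⟩
    rw [measure_mono_null (compl_subset_compl.2 subset_closure) hμD]
    exact ENNReal.zero_lt_top

end PseudoMetric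

section Besicovitch

variable {X : Type*} [MetricSpace X] [MeasurableSpace X] [BorelSpace X]
  [SecondCountableTopology X] [HasBesicovitchCovering X] (μ : Measure X) [SFinite μ]
  [μ.OuterRegular] {d c : ℝ} {A : Set X}

theorem exists_closedBall_cover_tsum_ediam_rpow_le (hd : 0 ≤ d) (hc : 0 < c)
    (hA : ∀ x ∈ A, ∀ r : ℝ, 0 < r → r ≤ 1 → ENNReal.ofReal (c * r ^ d) ≤ μ (closedBall x r))
    {δ : ℝ} (hδ : 0 < δ) (hδ1 : δ ≤ 1) {ε : ℝ≥0∞} (hε : ε ≠ 0) :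
    ∃ (t : Set X) (r : X → ℝ), t.Countable ∧ (∀ x ∈ t, r x ∈ Ioo 0 δ) ∧
      A ⊆ ⋃ x ∈ t, closedBall x (r x) ∧
      ∑' x : t, ediam (closedBall (x : X) (r x)) ^ d ≤
        ENNReal.ofReal (2 ^ d / c) * (μ A + ε) := by
  obtain ⟨t, r, ht, htA, hr, hcover, hsum⟩ :=
    Besicovitch.exists_closedBall_covering_tsum_measure_le μ hε (fun _ => Ioo 0 δ) A
      fun _ _ δ' hδ' => by simpa [Ioo_inter_Ioo] using lt_min hδ hδ'
  refine ⟨t, r, ht, hr, hcover, ?_⟩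
  have hterm : ∀ x : t, ediam (closedBall (x : X) (r x)) ^ d ≤
      ENNReal.ofReal (2 ^ d / c) * μ (closedBall (x : X) (r x)) := fun x => by
    obtain ⟨hr0, hrδ⟩ := hr x x.2
    calc ediam (closedBall (x : X) (r x)) ^ d ≤ ENNReal.ofReal ((2 * r x) ^ d) :=
          ediam_closedBall_rpow_le hd hr0.le
      _ = ENNReal.ofReal (2 ^ d / c) * ENNReal.ofReal (c * r x ^ d) := by
          rw [← ENNReal.ofReal_mul (by positivity), Real.mul_rpow zero_le_two hr0.le]
          field_simp
      _ ≤ ENNReal.ofReal (2 ^ d / c) * μ (closedBall (x : X) (r x)) :=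
          mul_le_mul_right (hA x (htA x.2) (r x) hr0 (by linarith)) _
  calc ∑' x : t, ediam (closedBall (x : X) (r x)) ^ d
      ≤ ∑' x : t, ENNReal.ofReal (2 ^ d / c) * μ (closedBall (x : X) (r x)) :=
        ENNReal.tsum_le_tsum hterm
    _ = ENNReal.ofReal (2 ^ d / c) * ∑' x : t, μ (closedBall (x : X) (r x)) :=
        ENNReal.tsum_mul_left
    _ ≤ ENNReal.ofReal (2 ^ d / c) * (μ A + ε) := mul_le_mul_right hsum _

theorem hausdorffMeasure_le_mul_measure_of_le_measure_closedBall (hd : 0 ≤ d) (hc : 0 < c)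
    (hA : ∀ x ∈ A, ∀ r : ℝ, 0 < r → r ≤ 1 → ENNReal.ofReal (c * r ^ d) ≤ μ (closedBall x r)) :
    μH[d] A ≤ ENNReal.ofReal (2 ^ d / c) * μ A := by
  set K := ENNReal.ofReal (2 ^ d / c)
  have hK : K ≠ 0 := ENNReal.ofReal_pos.2 (by positivity) |>.ne'
  have hslack : ∀ ε : ℝ≥0∞, ε ≠ 0 → μH[d] A ≤ K * (μ A + ε) := fun ε hε => by
    have hδ : ∀ k : ℕ, (0 : ℝ) < 1 / (k + 1) := fun k => Nat.one_div_pos_of_nat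
    have hδ1 : ∀ k : ℕ, 1 / ((k : ℝ) + 1) ≤ 1 := fun k =>
      div_le_one_of_le₀ (by linarith [k.cast_nonneg (α := ℝ)]) (by positivity)
    choose t r ht hr hcover hsum using fun k : ℕ =>
      exists_closedBall_cover_tsum_ediam_rpow_le μ hd hc hA (hδ k) (hδ1 k) hε
    have := fun k => (ht k).to_subtype
    refine (Measure.hausdorffMeasure_le_liminf_tsum d A
      (fun k : ℕ => ENNReal.ofReal (2 * (1 / (k + 1)))) ?_
      (fun k (x : t k) => closedBall (x : X) (r k x)) ?_ ?_).trans
      (liminf_le_of_frequently_le' (Frequently.of_forall (f := atTop) hsum))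
    · simpa using ENNReal.tendsto_ofReal
        (tendsto_one_div_add_atTop_nhds_zero_nat.const_mul (2 : ℝ))
    · refine Eventually.of_forall fun k x => ?_
      obtain ⟨hr0, hrδ⟩ := hr k x x.2
      exact (ediam_closedBall_le_ofReal hr0.le).trans (ENNReal.ofReal_le_ofReal (by linarith))
    · exact Eventually.of_forall fun k => by rw [iUnion_coe_set]; exact hcover k
  refine ENNReal.le_of_forall_pos_le_add fun ε hε _ => ?_
  calc μH[d] A ≤ K * (μ A + ε / K) :=
        hslack _ (ENNReal.div_ne_zero.2 ⟨by exact_mod_cast hε.ne', ENNReal.ofReal_ne_top⟩)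
    _ = K * μ A + ε := by rw [mul_add, ENNReal.mul_div_cancel hK ENNReal.ofReal_ne_top]

end Besicovitch

theorem closure_d_set_general (n : ℕ) (d : ℝ) (hd : 0 < d)
    (D : Set (EuclideanSpace ℝ (Fin n)))
    (μ : Measure (EuclideanSpace ℝ (Fin n))) (hμD : μ Dᶜ = 0)
    (c₁ c₂ : ℝ) (hc₁ : 0 < c₁) (hc₂ : 0 < c₂)
    (hμ : ∀ x ∈ D, ∀ r : ℝ, 0 < r → r ≤ 1 →
      ENNReal.ofReal (c₁ * r ^ d) ≤ μ (ball x r) ∧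
        μ (ball x r) ≤ ENNReal.ofReal (c₂ * r ^ d)) :
    (∃ (ν : Measure (EuclideanSpace ℝ (Fin n))) (c₁' c₂' : ℝ), 0 < c₁' ∧ 0 < c₂' ∧
      ν (closure D)ᶜ = 0 ∧
      ∀ x ∈ closure D, ∀ r : ℝ, 0 < r → r ≤ 1 →
        ENNReal.ofReal (c₁' * r ^ d) ≤ ν (ball x r) ∧
          ν (ball x r) ≤ ENNReal.ofReal (c₂' * r ^ d)) ∧
    Measure.hausdorffMeasure d (closure D \ D) = 0 := by
  have hlower : ∀ x ∈ closure D, ∀ r : ℝ, 0 < r → r ≤ 1 →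
      ENNReal.ofReal (c₁ / 2 ^ d * r ^ d) ≤ μ (ball x r) := fun x hx r hr hr1 => by
    refine le_measure_ball_of_mem_closure hx (half_lt_self hr) fun y hy => ?_
    rw [div_mul_comm, ← Real.div_rpow hr.le zero_le_two, mul_comm]
    exact (hμ y hy (r / 2) (half_pos hr) (by linarith)).1
  have hupper : ∀ x ∈ closure D, ∀ r : ℝ, 0 < r → r ≤ 1 →
      μ (ball x r) ≤ ENNReal.ofReal (c₂ * r ^ d) := fun x hx r hr hr1 =>
    measure_ball_le_of_mem_closure hx fun y hy => (hμ y hy r hr hr1).2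
  have := isLocallyFiniteMeasure_of_measure_ball_lt_top hμD one_pos fun x hx =>
    (hupper x hx 1 one_pos le_rfl).trans_lt ENNReal.ofReal_lt_top
  refine ⟨⟨μ, c₁ / 2 ^ d, c₂, by positivity, hc₂,
    measure_mono_null (compl_subset_compl.2 subset_closure) hμD,
    fun x hx r hr hr1 => ⟨hlower x hx r hr hr1, hupper x hx r hr hr1⟩⟩, ?_⟩
  have hnull : μ (closure D \ D) = 0 := measure_mono_null (fun _ hy => hy.2) hμD
  refine nonpos_iff_eq_zero.1 <|
    (hausdorffMeasure_le_mul_measure_of_le_measure_closedBall μ hd.le (by positivity)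
      fun x hx r hr hr1 => (hlower x hx.1 r hr hr1).trans (measure_mono ball_subset_closedBall)).trans ?_
  rw [hnull, mul_zero]

/-- If `D` is a `d`-set in `ℝⁿ` with `d`-measure `μ`, then its closure is also a
`d`-set, and the restriction of the `d`-dimensional Hausdorff measure to
`closure D \ D` is zero. -/
theorem closure_d_set (n : ℕ) (d : ℝ) (hd : 0 < d) (hdn : d ≤ n)
    (D : Set (EuclideanSpace ℝ (Fin n))) (hD : D.Nonempty) (hDborel : MeasurableSet D)
    (μ : Measure (EuclideanSpace ℝ (Fin n))) (hμD : μ Dᶜ = 0)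
    (c₁ c₂ : ℝ) (hc₁ : 0 < c₁) (hc₂ : 0 < c₂)
    (hμ : ∀ x ∈ D, ∀ r : ℝ, 0 < r → r ≤ 1 →
      ENNReal.ofReal (c₁ * r ^ d) ≤ μ (ball x r) ∧
        μ (ball x r) ≤ ENNReal.ofReal (c₂ * r ^ d)) :
    (∃ (ν : Measure (EuclideanSpace ℝ (Fin n))) (c₁' c₂' : ℝ), 0 < c₁' ∧ 0 < c₂' ∧
      ν (closure D)ᶜ = 0 ∧
      ∀ x ∈ closure D, ∀ r : ℝ, 0 < r → r ≤ 1 →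
        ENNReal.ofReal (c₁' * r ^ d) ≤ ν (ball x r) ∧
          ν (ball x r) ≤ ENNReal.ofReal (c₂' * r ^ d)) ∧
    Measure.hausdorffMeasure d (closure D \ D) = 0 :=
  closure_d_set_general n d hd D μ hμD c₁ c₂ hc₁ hc₂ hμ
end

section
/- Let ψ : (0,∞) → (0,∞) satisfy the upper scaling ψ(λt) ≤ a₂ λ^{2δ₂} ψ(t) for λ ≥ 1, t ≥ 1, with 2αδ₂ < 2k₀ for given α > 0 and integer k₀. Then for every i ∈ ℤ with 2^{i} ≥ 1 the integral ∫_{{h ∈ ℝⁿ : |h| < 2^{-i}}} ψ(|h|^{-1})^α |h|^{2k₀ − n} dh is finite and bounded by C ψ(2^{i})^α 2^{-2k₀ i} for a constant C independent of i. -/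
open MeasureTheory Metric Set
open scoped ENNReal

lemma small_ball_aux (n : ℕ) (hn : 1 ≤ n) (s : ℝ) (hs : 0 < n + s) :
    ∃ c : ℝ, 0 < c ∧ ∀ r : ℝ, 0 < r →
      (∫⁻ h : EuclideanSpace ℝ (Fin n) in ball 0 r, ENNReal.ofReal (‖h‖ ^ s)) ≤
        ENNReal.ofReal (c * r ^ (n + s)) := by
  haveI : Nonempty (Fin n) := ⟨⟨0, hn⟩⟩
  haveI : Nontrivial (EuclideanSpace ℝ (Fin n)) := by
    infer_instance
  set E := EuclideanSpace ℝ (Fin n)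
  have hBfin : volume (ball (0:E) 1) ≠ ⊤ := measure_ball_lt_top.ne
  have hBpos : 0 < volume (ball (0:E) 1) := measure_ball_pos _ _ one_pos
  set B : ℝ := (volume (ball (0:E) 1)).toReal with hBdef
  have hB : 0 < B := ENNReal.toReal_pos hBpos.ne' hBfin
  set M : ℝ := max 1 ((2:ℝ) ^ (-s)) with hMdef
  have hM1 : (1:ℝ) ≤ M := le_max_left _ _
  have hM : 0 < M := lt_of_lt_of_le one_pos hM1
  set q : ℝ := (2:ℝ) ^ (-(n + s)) with hqdef
  have hq0 : 0 < q := Real.rpow_pos_of_pos two_pos _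
  have hq1 : q < 1 := Real.rpow_lt_one_of_one_lt_of_neg one_lt_two (by linarith)
  refine ⟨M * B * (1 - q)⁻¹, mul_pos (mul_pos hM hB) (inv_pos.2 (by linarith)), fun r hr => ?_⟩
  set t : ℕ → ℝ := fun j => r * (2:ℝ)⁻¹ ^ j with htdef
  have ht : ∀ j, 0 < t j := fun j => by positivity
  have htmono : ∀ j, t (j+1) < t j := fun j => by
    simp only [htdef, pow_succ]
    nlinarith [pow_pos (inv_pos.2 (two_pos : (0:ℝ) < 2)) j]
  set A : ℕ → Set E := fun j => ball (0:E) (t j) \ ball 0 (t (j+1)) with hAdef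
  have hcover : ball (0:E) r \ {0} ⊆ ⋃ j, A j := by
    rintro h ⟨hball, hne⟩
    have hnorm : 0 < ‖h‖ := norm_pos_iff.2 hne
    have hlt : ‖h‖ < r := by simpa [dist_eq_norm] using hball
    have hex : ∃ j, t (j+1) ≤ ‖h‖ := by
      obtain ⟨k, hk⟩ := exists_pow_lt_of_lt_one (div_pos hnorm hr)
        (by norm_num : (2:ℝ)⁻¹ < 1)
      have htk : t k < ‖h‖ := by
        have h1 : r * (2:ℝ)⁻¹ ^ k < r * (‖h‖ / r) := mul_lt_mul_of_pos_left hk hr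
        have h2 : r * (‖h‖ / r) = ‖h‖ := by field_simp
        simpa [htdef, h2] using h1
      exact ⟨k, ((htmono k).trans htk).le⟩
    classical
    refine mem_iUnion.2 ⟨Nat.find hex, ?_, ?_⟩
    · simp only [mem_ball, dist_eq_norm, sub_zero]
      rcases h' : Nat.find hex with _ | m
      · simpa [htdef] using hlt
      · have hm : m < Nat.find hex := h' ▸ m.lt_succ_self
        have := Nat.find_min hex hm
        push_neg at this
        rw [dist_zero_right]; exact this
    · simp only [mem_ball, dist_eq_norm, sub_zero, not_lt]
      rw [dist_zero_right]; exact Nat.find_spec hex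
  have hsub : ball (0:E) r ⊆ {(0:E)} ∪ ⋃ j, A j := by
    intro x hx
    by_cases hx0 : x = 0
    · exact Or.inl (by simp [hx0])
    · exact Or.inr (hcover ⟨hx, hx0⟩)
  have hstep : ∀ j, (∫⁻ x in A j, ENNReal.ofReal (‖x‖ ^ s)) ≤
      ENNReal.ofReal (M * B * r ^ ((n:ℝ) + s) * q ^ j) := by
    intro j
    have hmeas : MeasurableSet (A j) := measurableSet_ball.diff measurableSet_ball
    have hpt : ∀ x ∈ A j, ENNReal.ofReal (‖x‖ ^ s) ≤ ENNReal.ofReal (M * t j ^ s) := by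
      intro x hx
      apply ENNReal.ofReal_le_ofReal
      obtain ⟨hx1, hx2⟩ := hx
      have hxu : ‖x‖ < t j := by simpa [dist_eq_norm] using hx1
      have hxl : t (j+1) ≤ ‖x‖ := by
        simpa [mem_ball, dist_eq_norm, not_lt] using hx2
      have hx0 : 0 < ‖x‖ := lt_of_lt_of_le (ht (j+1)) hxl
      rcases le_or_gt 0 s with hs' | hs'
      · calc ‖x‖ ^ s ≤ t j ^ s := Real.rpow_le_rpow (norm_nonneg x) hxu.le hs'
          _ = 1 * t j ^ s := (one_mul _).symm
          _ ≤ M * t j ^ s :=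
            mul_le_mul_of_nonneg_right hM1 (Real.rpow_nonneg (ht j).le s)
      · have h1 : ‖x‖ ^ s ≤ t (j+1) ^ s :=
          Real.rpow_le_rpow_of_nonpos (ht (j+1)) hxl hs'.le
        have h2 : t (j+1) ^ s = t j ^ s * (2:ℝ) ^ (-s) := by
          have he : t (j+1) = t j * 2⁻¹ := by simp [htdef, pow_succ]; ring
          rw [he, Real.mul_rpow (ht j).le (by norm_num),
            Real.inv_rpow (by norm_num : (0:ℝ) ≤ 2),
            ← Real.rpow_neg (by norm_num : (0:ℝ) ≤ 2)]
        calc ‖x‖ ^ s ≤ t j ^ s * (2:ℝ) ^ (-s) := h2 ▸ h1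
          _ ≤ t j ^ s * M := by
            apply mul_le_mul_of_nonneg_left (le_max_right _ _)
              (Real.rpow_nonneg (ht j).le s)
          _ = M * t j ^ s := mul_comm _ _
    have hvol : volume (ball (0:E) (t j)) =
        ENNReal.ofReal (t j ^ n) * volume (ball (0:E) 1) := by
      rw [Measure.addHaar_ball volume (0:E) (ht j).le, finrank_euclideanSpace_fin]
    have hexp : ((2:ℝ)⁻¹ ^ j : ℝ) ^ ((n:ℝ) + s) = q ^ j := by
      rw [hqdef, ← Real.rpow_natCast ((2:ℝ)⁻¹) j,
        ← Real.rpow_natCast ((2:ℝ) ^ (-((n:ℝ) + s))) j,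
        ← Real.rpow_mul (by norm_num : (0:ℝ) ≤ 2⁻¹),
        ← Real.rpow_mul (by norm_num : (0:ℝ) ≤ 2),
        Real.inv_rpow (by norm_num : (0:ℝ) ≤ 2),
        ← Real.rpow_neg (by norm_num : (0:ℝ) ≤ 2)]
      ring_nf
    have harith : M * t j ^ s * (t j ^ n * B) = M * B * r ^ ((n:ℝ) + s) * q ^ j := by
      have h1 : (t j : ℝ) ^ (n:ℕ) = t j ^ ((n:ℕ) : ℝ) := (Real.rpow_natCast _ n).symm
      have h2 : t j ^ s * t j ^ ((n:ℕ) : ℝ) = t j ^ ((n:ℝ) + s) := by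
        rw [← Real.rpow_add (ht j)]; ring_nf
      have h3 : t j ^ ((n:ℝ) + s) = r ^ ((n:ℝ) + s) * q ^ j := by
        have : t j = r * (2:ℝ)⁻¹ ^ j := rfl
        rw [this, Real.mul_rpow hr.le (by positivity), hexp]
      calc M * t j ^ s * (t j ^ n * B)
          = M * B * (t j ^ s * t j ^ ((n:ℕ) : ℝ)) := by rw [← h1]; ring
        _ = M * B * (r ^ ((n:ℝ) + s) * q ^ j) := by rw [h2, h3]
        _ = M * B * r ^ ((n:ℝ) + s) * q ^ j := by ring
    calc (∫⁻ x in A j, ENNReal.ofReal (‖x‖ ^ s))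
        ≤ ∫⁻ _ in A j, ENNReal.ofReal (M * t j ^ s) := setLIntegral_mono' hmeas hpt
      _ = ENNReal.ofReal (M * t j ^ s) * volume (A j) := by rw [setLIntegral_const]
      _ ≤ ENNReal.ofReal (M * t j ^ s) * volume (ball (0:E) (t j)) := by
          exact mul_le_mul_right (measure_mono diff_subset) _
      _ = ENNReal.ofReal (M * t j ^ s) * (ENNReal.ofReal (t j ^ n) * ENNReal.ofReal B) := by
          rw [hvol, hBdef, ENNReal.ofReal_toReal hBfin]
      _ = ENNReal.ofReal (M * t j ^ s * (t j ^ n * B)) := by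
          rw [← ENNReal.ofReal_mul (by positivity), ← ENNReal.ofReal_mul (by positivity)]
      _ = ENNReal.ofReal (M * B * r ^ ((n:ℝ) + s) * q ^ j) := by rw [harith]
  calc (∫⁻ h : E in ball 0 r, ENNReal.ofReal (‖h‖ ^ s))
      ≤ ∫⁻ h : E in {(0:E)} ∪ ⋃ j, A j, ENNReal.ofReal (‖h‖ ^ s) :=
        lintegral_mono_set hsub
    _ ≤ (∫⁻ h : E in {(0:E)}, ENNReal.ofReal (‖h‖ ^ s)) +
        ∫⁻ h : E in ⋃ j, A j, ENNReal.ofReal (‖h‖ ^ s) := lintegral_union_le _ _ _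
    _ = ∫⁻ h : E in ⋃ j, A j, ENNReal.ofReal (‖h‖ ^ s) := by
        rw [setLIntegral_measure_zero _ _ (measure_singleton _), zero_add]
    _ ≤ ∑' j, ∫⁻ h : E in A j, ENNReal.ofReal (‖h‖ ^ s) := lintegral_iUnion_le _ _
    _ ≤ ∑' j, ENNReal.ofReal (M * B * r ^ ((n:ℝ) + s) * q ^ j) :=
        ENNReal.tsum_le_tsum hstep
    _ = ∑' j, ENNReal.ofReal (M * B * r ^ ((n:ℝ) + s)) * (ENNReal.ofReal q) ^ j := by
        congr 1; funext j
        rw [← ENNReal.ofReal_pow hq0.le, ← ENNReal.ofReal_mul (by positivity)]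
    _ = ENNReal.ofReal (M * B * r ^ ((n:ℝ) + s)) * (1 - ENNReal.ofReal q)⁻¹ := by
        rw [ENNReal.tsum_mul_left, ENNReal.tsum_geometric]
    _ = ENNReal.ofReal (M * B * (1 - q)⁻¹ * r ^ ((n:ℝ) + s)) := by
        rw [← ENNReal.ofReal_one, ← ENNReal.ofReal_sub _ hq0.le,
          ← ENNReal.ofReal_inv_of_pos (by linarith), ← ENNReal.ofReal_mul (by positivity)]
        ring_nf

/-- Key small-ball estimate: if `ψ` satisfies the upper scaling
`ψ(λt) ≤ a₂ λ^{2δ₂} ψ(t)` for `λ ≥ 1, t ≥ 1` and `αδ₂ < k₀`, then for every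
`i ∈ ℤ` with `2^i ≥ 1`, the integral
`∫_{|h| < 2^{-i}} ψ(|h|⁻¹)^α |h|^{2k₀−n} dh` is finite and bounded by
`C ψ(2^i)^α 2^{-2k₀ i}` with `C` independent of `i`. -/
theorem small_ball_estimate (n : ℕ) (hn : 1 ≤ n) (ψ : ℝ → ℝ)
    (hψpos : ∀ t > 0, 0 < ψ t)
    (a₂ δ₂ α : ℝ) (ha₂ : 0 < a₂) (hδ₂ : 0 < δ₂) (hα : 0 < α) (k₀ : ℕ) (hk₀ : 1 ≤ k₀)
    (hscale : ∀ l : ℝ, 1 ≤ l → ∀ t : ℝ, 1 ≤ t → ψ (l * t) ≤ a₂ * l ^ (2 * δ₂) * ψ t)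
    (hαδ : α * δ₂ < k₀) :
    ∃ C : ℝ, 0 < C ∧ ∀ i : ℤ, (1 : ℝ) ≤ (2 : ℝ) ^ i →
      (∫⁻ h : EuclideanSpace ℝ (Fin n) in ball 0 ((2 : ℝ) ^ (-i)),
          ENNReal.ofReal (ψ ‖h‖⁻¹ ^ α * ‖h‖ ^ ((2 * k₀ : ℝ) - n))) ≠ ⊤ ∧
      (∫⁻ h : EuclideanSpace ℝ (Fin n) in ball 0 ((2 : ℝ) ^ (-i)),
          ENNReal.ofReal (ψ ‖h‖⁻¹ ^ α * ‖h‖ ^ ((2 * k₀ : ℝ) - n))) ≤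
        ENNReal.ofReal (C * ψ ((2 : ℝ) ^ i) ^ α * (2 : ℝ) ^ (-(2 * k₀ : ℤ) * i)) := by
  haveI : Nonempty (Fin n) := ⟨⟨0, hn⟩⟩
  haveI : Nontrivial (EuclideanSpace ℝ (Fin n)) := inferInstance
  set E := EuclideanSpace ℝ (Fin n)
  set e : ℝ := 2 * δ₂ * α with hedef
  set s : ℝ := 2 * (k₀:ℝ) - n - e with hsdef
  have hs : 0 < (n:ℝ) + s := by
    have hk : (1:ℝ) ≤ (k₀:ℝ) := by exact_mod_cast hk₀
    have : α * δ₂ < (k₀:ℝ) := hαδ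
    simp only [hsdef, hedef]; nlinarith
  obtain ⟨c, hc, hcb⟩ := small_ball_aux n hn s hs
  refine ⟨c * a₂ ^ α, mul_pos hc (Real.rpow_pos_of_pos ha₂ α), fun i h2i => ?_⟩
  set r : ℝ := (2:ℝ) ^ (-i) with hrdef
  have hr : 0 < r := zpow_pos two_pos _
  have hr1 : r * (2:ℝ) ^ i = 1 := by
    rw [hrdef, ← zpow_add₀ (two_ne_zero : (2:ℝ) ≠ 0), neg_add_cancel, zpow_zero]
  have h2ipos : (0:ℝ) < (2:ℝ) ^ i := zpow_pos two_pos _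
  have hψ2 : 0 < ψ ((2:ℝ) ^ i) := hψpos _ h2ipos
  set K : ℝ := a₂ ^ α * ψ ((2:ℝ) ^ i) ^ α * r ^ e with hKdef
  have hK : 0 < K := by
    apply mul_pos (mul_pos (Real.rpow_pos_of_pos ha₂ α) (Real.rpow_pos_of_pos hψ2 α))
      (Real.rpow_pos_of_pos hr _)
  -- pointwise bound
  have key : ∀ x : E, x ≠ 0 → x ∈ ball (0:E) r →
      ENNReal.ofReal (ψ ‖x‖⁻¹ ^ α * ‖x‖ ^ ((2 * k₀ : ℝ) - n)) ≤
        ENNReal.ofReal K * ENNReal.ofReal (‖x‖ ^ s) := by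
    intro x hx0 hxb
    set ρ : ℝ := ‖x‖ with hρdef
    have hρ : 0 < ρ := norm_pos_iff.2 hx0
    have hρr : ρ < r := by simpa [hρdef, dist_eq_norm] using hxb
    have hl : 1 ≤ r / ρ := (one_le_div hρ).2 hρr.le
    have hinv : ρ⁻¹ = (r / ρ) * (2:ℝ) ^ i := by
      rw [div_mul_eq_mul_div, hr1, one_div]
    have hψb : ψ ρ⁻¹ ≤ a₂ * (r / ρ) ^ (2 * δ₂) * ψ ((2:ℝ) ^ i) := by
      rw [hinv]; exact hscale (r / ρ) hl _ h2i
    have hψα : ψ ρ⁻¹ ^ α ≤ (a₂ * (r / ρ) ^ (2 * δ₂) * ψ ((2:ℝ) ^ i)) ^ α :=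
      Real.rpow_le_rpow (hψpos _ (inv_pos.2 hρ)).le hψb hα.le
    have hdρ : 0 ≤ r / ρ := div_nonneg hr.le hρ.le
    have hexpand : (a₂ * (r / ρ) ^ (2 * δ₂) * ψ ((2:ℝ) ^ i)) ^ α =
        a₂ ^ α * (r ^ e * ρ ^ (-e)) * ψ ((2:ℝ) ^ i) ^ α := by
      rw [Real.mul_rpow (by positivity) hψ2.le, Real.mul_rpow ha₂.le (by positivity)]
      congr 1
      congr 1
      rw [← Real.rpow_mul hdρ, hedef, Real.div_rpow hr.le hρ.le, div_eq_mul_inv,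
        ← Real.rpow_neg hρ.le]
    apply le_trans (ENNReal.ofReal_le_ofReal ?_) (le_of_eq (ENNReal.ofReal_mul hK.le))
    calc ψ ρ⁻¹ ^ α * ρ ^ ((2 * k₀ : ℝ) - n)
        ≤ (a₂ * (r / ρ) ^ (2 * δ₂) * ψ ((2:ℝ) ^ i)) ^ α * ρ ^ ((2 * k₀ : ℝ) - n) :=
          mul_le_mul_of_nonneg_right hψα (Real.rpow_nonneg hρ.le _)
      _ = K * (ρ ^ (-e) * ρ ^ ((2 * k₀ : ℝ) - n)) := by rw [hexpand, hKdef]; ring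
      _ = K * ρ ^ s := by
          rw [← Real.rpow_add hρ]; congr 1; rw [hsdef]; ring
  have h0 : ∀ᵐ x : E ∂volume, x ≠ 0 := by
    rw [ae_iff]
    simpa using measure_singleton (0:E)
  have hae : ∀ᵐ x : E ∂(volume.restrict (ball (0:E) r)),
      ENNReal.ofReal (ψ ‖x‖⁻¹ ^ α * ‖x‖ ^ ((2 * k₀ : ℝ) - n)) ≤
        ENNReal.ofReal K * ENNReal.ofReal (‖x‖ ^ s) := by
    filter_upwards [ae_restrict_mem measurableSet_ball, ae_restrict_of_ae h0] with x hx hx0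
    exact key x hx0 hx
  have hbound : (∫⁻ h : E in ball 0 r,
      ENNReal.ofReal (ψ ‖h‖⁻¹ ^ α * ‖h‖ ^ ((2 * k₀ : ℝ) - n))) ≤
      ENNReal.ofReal (c * a₂ ^ α * ψ ((2:ℝ) ^ i) ^ α * (2:ℝ) ^ (-(2 * k₀ : ℤ) * i)) := by
    calc (∫⁻ h : E in ball 0 r, ENNReal.ofReal (ψ ‖h‖⁻¹ ^ α * ‖h‖ ^ ((2 * k₀ : ℝ) - n)))
        ≤ ∫⁻ h : E in ball 0 r, ENNReal.ofReal K * ENNReal.ofReal (‖h‖ ^ s) :=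
          lintegral_mono_ae hae
      _ = ENNReal.ofReal K * ∫⁻ h : E in ball 0 r, ENNReal.ofReal (‖h‖ ^ s) :=
          lintegral_const_mul' _ _ ENNReal.ofReal_ne_top
      _ ≤ ENNReal.ofReal K * ENNReal.ofReal (c * r ^ ((n:ℝ) + s)) :=
          mul_le_mul_right (hcb r hr) _
      _ = ENNReal.ofReal (K * (c * r ^ ((n:ℝ) + s))) := (ENNReal.ofReal_mul hK.le).symm
      _ = ENNReal.ofReal (c * a₂ ^ α * ψ ((2:ℝ) ^ i) ^ α * (2:ℝ) ^ (-(2 * k₀ : ℤ) * i)) := by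
          congr 1
          have h4 : r ^ e * r ^ ((n:ℝ) + s) = r ^ (((2 * k₀ : ℕ) : ℝ)) := by
            rw [← Real.rpow_add hr]; congr 1; rw [hsdef]; push_cast; ring
          have h5 : r ^ (((2 * k₀ : ℕ) : ℝ)) = (2:ℝ) ^ (-(2 * k₀ : ℤ) * i) := by
            rw [Real.rpow_natCast, hrdef, ← zpow_natCast ((2:ℝ) ^ (-i)) (2 * k₀),
              ← zpow_mul]
            congr 1
            push_cast
            ring
          rw [hKdef]
          calc a₂ ^ α * ψ ((2:ℝ) ^ i) ^ α * r ^ e * (c * r ^ ((n:ℝ) + s))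
              = c * a₂ ^ α * ψ ((2:ℝ) ^ i) ^ α * (r ^ e * r ^ ((n:ℝ) + s)) := by ring
            _ = c * a₂ ^ α * ψ ((2:ℝ) ^ i) ^ α * (2:ℝ) ^ (-(2 * k₀ : ℤ) * i) := by
                rw [h4, h5]
  exact ⟨ne_top_of_le_ne_top ENNReal.ofReal_ne_top hbound, hbound⟩
end
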